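/- Chordal isoperimetric estimate: let Π be a convex hexagon with sides of lengths ℓ₁,...,ℓ₆, each ℓᵢ < 1, and let γ be a closed curve obtained by replacing each side of Π by a circular arc with the same endpoints, where the i-th arc encloses area xᵢ ≥ 0 with the i-th side and xᵢ/ℓᵢ ≤ π/8 for all i. Then L(γ) ≥ P(Π)·arc₁((∑xᵢ)/P(Π)). -/

import Mathlib

/-!
Parametrise arcs over a unit chord by the half central angle `θ ∈ [0, π)`: the enclosed area
`g θ = (θ - sin θ cos θ) / (4 sin² θ)` and the arc length `h θ = θ / sin θ` both increase
strictly, `g` onto `[0, ∞)`, and `f ∘ g = h`. Hence `f` is increasing, and its slopes are values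
of `dh/dg = 2 sin θ`, which increases for `θ ≤ π/2`, i.e. on `[0, π/8] = g '' [0, π/2]`; so `f` is
convex there. Jensen's inequality with weights `ℓᵢ` at the points `xᵢ/ℓᵢ ∈ [0, π/8]` gives the
bound with `∑ ℓᵢ f(xᵢ/ℓᵢ)`, and `xᵢ/ℓᵢ ≤ xᵢ/ℓᵢ²` (as `ℓᵢ < 1`) with monotonicity finishes.
-/

open scoped BigOperators

/-- `f` is the function `arc₁`: `f x` is the length of the circular arc subtending a
chord of length `1` and enclosing, together with the chord, a region of area `x`.
By scaling, `arc(ℓ, x) = ℓ · arc₁(x/ℓ²)`. -/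
def IsArcOne (f : ℝ → ℝ) : Prop :=
  ContinuousOn f (Set.Ici 0) ∧
  ∀ θ ∈ Set.Ioo 0 Real.pi,
    f ((θ - Real.sin θ * Real.cos θ) / (4 * Real.sin θ ^ 2)) = θ / Real.sin θ

open Real Set Filter Topology

theorem monotoneOn_image_of_comp_eqOn {α β γ : Type*} [LinearOrder α] [Preorder β] [Preorder γ]
    {f : β → γ} {g : α → β} {h : α → γ} {s : Set α} (hg : StrictMonoOn g s)
    (hh : MonotoneOn h s) (hfgh : EqOn (f ∘ g) h s) : MonotoneOn f (g '' s) := by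
  rintro _ ⟨a, ha, rfl⟩ _ ⟨b, hb, rfl⟩ hab
  rw [← Function.comp_apply (f := f), ← Function.comp_apply (f := f), hfgh ha, hfgh hb]
  exact hh ha hb ((hg.le_iff_le ha hb).1 hab)

theorem exists_slope_eq_ratio_deriv {g h g' h' : ℝ → ℝ} {a b : ℝ} (hab : a < b)
    (hg : ContinuousOn g (Icc a b)) (hh : ContinuousOn h (Icc a b))
    (hgd : ∀ t ∈ Ioo a b, HasDerivAt g (g' t) t) (hhd : ∀ t ∈ Ioo a b, HasDerivAt h (h' t) t)
    (hg' : ∀ t ∈ Ioo a b, g' t ≠ 0) (hgab : g a ≠ g b) :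
    ∃ c ∈ Ioo a b, (h b - h a) / (g b - g a) = h' c / g' c := by
  obtain ⟨c, hc, hcauchy⟩ := exists_ratio_hasDerivAt_eq_ratio_slope h h' hab hh hhd g g' hg hgd
  refine ⟨c, hc, ?_⟩
  rw [div_eq_div_iff (sub_ne_zero.2 hgab.symm) (hg' c hc)]
  linarith

/-- By Cauchy's mean value theorem every slope of `f` on `g '' [a, b]` is a value of `ρ = dh/dg`. -/
theorem convexOn_Icc_of_comp_eqOn {f g h g' ρ : ℝ → ℝ} {a b : ℝ} (hab : a ≤ b)
    (hg : ContinuousOn g (Icc a b)) (hh : ContinuousOn h (Icc a b))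
    (hgd : ∀ t ∈ Ioo a b, HasDerivAt g (g' t) t) (hhd : ∀ t ∈ Ioo a b, HasDerivAt h (ρ t * g' t) t)
    (hg' : ∀ t ∈ Ioo a b, 0 < g' t) (hρ : MonotoneOn ρ (Ioo a b))
    (hfgh : EqOn (f ∘ g) h (Icc a b)) : ConvexOn ℝ (Icc (g a) (g b)) f := by
  have hg_mono : StrictMonoOn g (Icc a b) :=
    strictMonoOn_of_deriv_pos (convex_Icc a b) hg fun t ht => by
      rw [interior_Icc] at ht
      rw [(hgd t ht).deriv]
      exact hg' t ht
  have slope_eq : ∀ {u v}, u ∈ Icc a b → v ∈ Icc a b → u < v →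
      ∃ c ∈ Ioo u v, (f (g v) - f (g u)) / (g v - g u) = ρ c := by
    intro u v hu hv huv
    have hsub : Icc u v ⊆ Icc a b := Icc_subset_Icc hu.1 hv.2
    have hIoo : Ioo u v ⊆ Ioo a b := Ioo_subset_Ioo hu.1 hv.2
    obtain ⟨c, hc, hslope⟩ := exists_slope_eq_ratio_deriv huv (hg.mono hsub) (hh.mono hsub)
      (fun t ht => hgd t (hIoo ht)) (fun t ht => hhd t (hIoo ht))
      (fun t ht => (hg' t (hIoo ht)).ne') (hg_mono hu hv huv).ne
    refine ⟨c, hc, ?_⟩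
    rw [← Function.comp_apply (f := f), ← Function.comp_apply (f := f), hfgh hu, hfgh hv, hslope,
      mul_div_cancel_right₀ _ (hg' c (hIoo hc)).ne']
  refine convexOn_of_slope_mono_adjacent (convex_Icc _ _) fun {p q r} hp hr hpq hqr => ?_
  have hq : q ∈ Icc (g a) (g b) := ⟨hp.1.trans hpq.le, hqr.le.trans hr.2⟩
  obtain ⟨u, hu, rfl⟩ := intermediate_value_Icc hab hg hp
  obtain ⟨v, hv, rfl⟩ := intermediate_value_Icc hab hg hq
  obtain ⟨w, hw, rfl⟩ := intermediate_value_Icc hab hg hr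
  obtain ⟨c₁, hc₁, h₁⟩ := slope_eq hu hv ((hg_mono.lt_iff_lt hu hv).1 hpq)
  obtain ⟨c₂, hc₂, h₂⟩ := slope_eq hv hw ((hg_mono.lt_iff_lt hv hw).1 hqr)
  rw [h₁, h₂]
  exact hρ ⟨hu.1.trans_lt hc₁.1, hc₁.2.trans_le hv.2⟩ ⟨hv.1.trans_lt hc₂.1, hc₂.2.trans_le hw.2⟩
    (hc₁.2.trans hc₂.1).le

theorem ConvexOn.sum_mul_map_sum_div_sum_le {ι : Type*} {s : Set ℝ} {φ : ℝ → ℝ}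
    (hφ : ConvexOn ℝ s φ) {t : Finset ι} (ht : t.Nonempty) {ℓ x : ι → ℝ}
    (hℓ : ∀ i ∈ t, 0 < ℓ i) (hmem : ∀ i ∈ t, x i / ℓ i ∈ s) :
    (∑ i ∈ t, ℓ i) * φ ((∑ i ∈ t, x i) / ∑ i ∈ t, ℓ i) ≤ ∑ i ∈ t, ℓ i * φ (x i / ℓ i) := by
  have hL : 0 < ∑ i ∈ t, ℓ i := Finset.sum_pos hℓ ht
  have hjensen := hφ.map_centerMass_le (fun i hi => (hℓ i hi).le) hL hmem
  have hx : ∑ i ∈ t, ℓ i * (x i / ℓ i) = ∑ i ∈ t, x i :=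
    Finset.sum_congr rfl fun i hi => mul_div_cancel₀ _ (hℓ i hi).ne'
  simp only [Finset.centerMass, smul_eq_mul, Function.comp_apply, hx] at hjensen
  rw [div_eq_inv_mul]
  calc (∑ i ∈ t, ℓ i) * φ ((∑ i ∈ t, ℓ i)⁻¹ * ∑ i ∈ t, x i)
      ≤ (∑ i ∈ t, ℓ i) * ((∑ i ∈ t, ℓ i)⁻¹ * ∑ i ∈ t, ℓ i * φ (x i / ℓ i)) := by gcongr
    _ = ∑ i ∈ t, ℓ i * φ (x i / ℓ i) := by field_simp

/-- With `θ` half the central angle of a circular arc over a unit chord (radius `1 / (2 sin θ)`),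
`unitChordArea θ` is the area between arc and chord. -/
noncomputable def unitChordArea (θ : ℝ) : ℝ := (θ - sin θ * cos θ) / (4 * sin θ ^ 2)

/-- The length `θ / sin θ` of the same arc, written with `sinc` so that it is `1` at `θ = 0`. -/
noncomputable def unitChordArcLength (θ : ℝ) : ℝ := (sinc θ)⁻¹

lemma unitChordArea_zero : unitChordArea 0 = 0 := by simp [unitChordArea]

lemma unitChordArea_pi_div_two : unitChordArea (π / 2) = π / 8 := by
  simp only [unitChordArea, sin_pi_div_two, cos_pi_div_two]
  ring

lemma unitChordArcLength_of_ne_zero {θ : ℝ} (hθ : θ ≠ 0) : unitChordArcLength θ = θ / sin θ := by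
  rw [unitChordArcLength, sinc_of_ne_zero hθ, inv_div]

lemma sin_mul_cos_le {θ : ℝ} (hθ : 0 ≤ θ) : sin θ * cos θ ≤ θ := by
  have := sin_le (by positivity : 0 ≤ 2 * θ)
  rw [sin_two_mul] at this
  linarith

lemma unitChordArea_nonneg {θ : ℝ} (hθ : 0 ≤ θ) : 0 ≤ unitChordArea θ :=
  div_nonneg (sub_nonneg.2 (sin_mul_cos_le hθ)) (by positivity)

lemma unitChordArea_le_mul {θ : ℝ} (hθ : 0 < θ) (hθπ : θ ≤ π / 2) :
    unitChordArea θ ≤ π ^ 2 / 24 * θ := by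
  have hnum : θ - sin θ * cos θ ≤ 2 / 3 * θ ^ 3 := by
    have := sin_ge_sub_cube (by positivity : 0 ≤ 2 * θ)
    rw [sin_two_mul] at this
    linarith
  have hsin : 2 / π * θ ≤ sin θ := mul_le_sin hθ.le hθπ
  have hden : 16 / π ^ 2 * θ ^ 2 ≤ 4 * sin θ ^ 2 := by
    have := mul_self_le_mul_self (by positivity) hsin
    calc 16 / π ^ 2 * θ ^ 2 = 4 * ((2 / π * θ) * (2 / π * θ)) := by ring
      _ ≤ 4 * sin θ ^ 2 := by rw [sq]; gcongr
  calc unitChordArea θ ≤ 2 / 3 * θ ^ 3 / (16 / π ^ 2 * θ ^ 2) :=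
        div_le_div₀ (by positivity) hnum (by positivity) hden
    _ = π ^ 2 / 24 * θ := by field_simp; ring

lemma continuousOn_unitChordArea : ContinuousOn unitChordArea (Ico 0 π) := by
  intro θ hθ
  rcases hθ.1.eq_or_lt with rfl | hθ0
  · have hle : ∀ᶠ t in 𝓝[Ico 0 π] 0, unitChordArea t ≤ π ^ 2 / 24 * t := by
      filter_upwards [self_mem_nhdsWithin,
        nhdsWithin_le_nhds (Iio_mem_nhds (by positivity : (0 : ℝ) < π / 2))] with t ht htπ
      rcases ht.1.eq_or_lt with rfl | ht0
      · simp [unitChordArea_zero]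
      · exact unitChordArea_le_mul ht0 htπ.le
    have hlim : Tendsto (fun t => π ^ 2 / 24 * t) (𝓝[Ico 0 π] 0) (𝓝 0) := by
      refine tendsto_nhdsWithin_of_tendsto_nhds ?_
      exact (continuous_const_mul _).tendsto' 0 0 (mul_zero _)
    rw [ContinuousWithinAt, unitChordArea_zero]
    exact squeeze_zero' (eventually_nhdsWithin_of_forall fun t ht => unitChordArea_nonneg ht.1)
      hle hlim
  · have := sin_pos_of_pos_of_lt_pi hθ0 hθ.2
    exact (ContinuousAt.div (by fun_prop) (by fun_prop) (by positivity)).continuousWithinAt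

lemma continuousOn_unitChordArcLength : ContinuousOn unitChordArcLength (Ico 0 π) := by
  refine continuous_sinc.continuousOn.inv₀ fun θ hθ => ?_
  rcases hθ.1.eq_or_lt with rfl | hθ0
  · simp [sinc_zero]
  · rw [sinc_of_ne_zero hθ0.ne']
    exact (div_pos (sin_pos_of_pos_of_lt_pi hθ0 hθ.2) hθ0).ne'

lemma sin_sub_mul_cos_pos {θ : ℝ} (hθ : θ ∈ Ioo 0 π) : 0 < sin θ - θ * cos θ := by
  rcases lt_or_ge θ (π / 2) with hθπ | hθπ
  · have hcos : 0 < cos θ := cos_pos_of_mem_Ioo ⟨by linarith [hθ.1], hθπ⟩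
    have := lt_tan hθ.1 hθπ
    rw [tan_eq_sin_div_cos, lt_div_iff₀ hcos] at this
    linarith
  · have hcos : cos θ ≤ 0 := cos_nonpos_of_pi_div_two_le_of_le hθπ (by linarith [hθ.2])
    nlinarith [sin_pos_of_pos_of_lt_pi hθ.1 hθ.2, hθ.1]

lemma hasDerivAt_unitChordArea {θ : ℝ} (hsin : sin θ ≠ 0) :
    HasDerivAt unitChordArea ((sin θ - θ * cos θ) / (2 * sin θ ^ 3)) θ := by
  have hnum : HasDerivAt (fun t => t - sin t * cos t) (1 - (cos θ * cos θ + sin θ * -sin θ)) θ :=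
    (hasDerivAt_id θ).sub ((hasDerivAt_sin θ).mul (hasDerivAt_cos θ))
  have hden : HasDerivAt (fun t => 4 * sin t ^ 2) (4 * (2 * sin θ ^ 1 * cos θ)) θ := by
    simpa using ((hasDerivAt_sin θ).pow 2).const_mul 4
  refine (hnum.div hden (by positivity)).congr_deriv ?_
  field_simp
  linear_combination (2 * sin θ) * sin_sq_add_cos_sq θ

lemma hasDerivAt_unitChordArcLength {θ : ℝ} (hθ : θ ≠ 0) (hsin : sin θ ≠ 0) :
    HasDerivAt unitChordArcLength ((sin θ - θ * cos θ) / sin θ ^ 2) θ := by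
  have hd := (hasDerivAt_id θ).div (hasDerivAt_sin θ) hsin
  refine (hd.congr_of_eventuallyEq ?_).congr_deriv (by simp)
  filter_upwards [isOpen_ne.mem_nhds hθ] with t ht
  exact unitChordArcLength_of_ne_zero ht

lemma strictMonoOn_unitChordArea : StrictMonoOn unitChordArea (Ico 0 π) := by
  refine strictMonoOn_of_deriv_pos (convex_Ico 0 π) continuousOn_unitChordArea fun θ hθ => ?_
  rw [interior_Ico] at hθ
  have hsin := sin_pos_of_pos_of_lt_pi hθ.1 hθ.2
  rw [(hasDerivAt_unitChordArea hsin.ne').deriv]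
  exact div_pos (sin_sub_mul_cos_pos hθ) (by positivity)

lemma strictMonoOn_unitChordArcLength : StrictMonoOn unitChordArcLength (Ico 0 π) := by
  refine strictMonoOn_of_deriv_pos (convex_Ico 0 π) continuousOn_unitChordArcLength
    fun θ hθ => ?_
  rw [interior_Ico] at hθ
  have hsin := sin_pos_of_pos_of_lt_pi hθ.1 hθ.2
  rw [(hasDerivAt_unitChordArcLength hθ.1.ne' hsin.ne').deriv]
  exact div_pos (sin_sub_mul_cos_pos hθ) (by positivity)

lemma tendsto_unitChordArea_atTop : Tendsto unitChordArea (𝓝[Ioo 0 π] π) atTop := by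
  have hnum : Tendsto (fun θ => θ - sin θ * cos θ) (𝓝[Ioo 0 π] π) (𝓝 π) := by
    simpa using ((by fun_prop : Continuous fun θ => θ - sin θ * cos θ).tendsto π).mono_left
      nhdsWithin_le_nhds
  have hden : Tendsto (fun θ => 4 * sin θ ^ 2) (𝓝[Ioo 0 π] π) (𝓝[>] 0) := by
    refine tendsto_nhdsWithin_of_tendsto_nhds_of_eventually_within _ ?_ ?_
    · simpa using ((by fun_prop : Continuous fun θ => 4 * sin θ ^ 2).tendsto π).mono_left
        nhdsWithin_le_nhds
    · filter_upwards [self_mem_nhdsWithin] with t ht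
      have := sin_pos_of_pos_of_lt_pi ht.1 ht.2
      exact mem_Ioi.2 (by positivity)
  exact (hnum.pos_mul_atTop pi_pos (tendsto_inv_nhdsGT_zero.comp hden)).congr fun θ => by
    simp [unitChordArea, div_eq_mul_inv]

lemma Ici_subset_image_unitChordArea : Ici 0 ⊆ unitChordArea '' Ico 0 π := by
  have := right_nhdsWithin_Ioo_neBot pi_pos
  simpa only [unitChordArea_zero] using
    isPreconnected_Ico.intermediate_value_Ici (left_mem_Ico.2 pi_pos)
      ((nhdsWithin_mono _ Ioo_subset_Ico_self).trans inf_le_right)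
      continuousOn_unitChordArea tendsto_unitChordArea_atTop

namespace IsArcOne

variable {f : ℝ → ℝ} (hf : IsArcOne f)
include hf

theorem comp_unitChordArea_eqOn : EqOn (f ∘ unitChordArea) unitChordArcLength (Ico 0 π) := by
  refine EqOn.of_subset_closure (s := Ioo 0 π) (fun θ hθ => ?_) ?_ continuousOn_unitChordArcLength
    Ioo_subset_Ico_self (by rw [closure_Ioo pi_pos.ne]; exact Ico_subset_Icc_self)
  · rw [Function.comp_apply, unitChordArcLength_of_ne_zero hθ.1.ne']
    exact hf.2 θ hθ
  · exact hf.1.comp continuousOn_unitChordArea fun θ hθ => unitChordArea_nonneg hθ.1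

theorem monotoneOn : MonotoneOn f (Ici 0) :=
  (monotoneOn_image_of_comp_eqOn strictMonoOn_unitChordArea
    strictMonoOn_unitChordArcLength.monotoneOn hf.comp_unitChordArea_eqOn).mono
    Ici_subset_image_unitChordArea

theorem convexOn : ConvexOn ℝ (Icc 0 (π / 8)) f := by
  have hsub : Icc 0 (π / 2) ⊆ Ico 0 π := Icc_subset_Ico_right (by linarith [pi_pos])
  have hIoo : ∀ {θ}, θ ∈ Ioo 0 (π / 2) → θ ∈ Ioo 0 π := fun hθ =>
    ⟨hθ.1, hθ.2.trans (by linarith [pi_pos])⟩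
  have hsin : ∀ {θ}, θ ∈ Ioo 0 (π / 2) → 0 < sin θ := fun hθ =>
    sin_pos_of_pos_of_lt_pi (hIoo hθ).1 (hIoo hθ).2
  rw [← unitChordArea_zero, ← unitChordArea_pi_div_two]
  refine convexOn_Icc_of_comp_eqOn (ρ := fun θ => 2 * sin θ) (by positivity)
    (continuousOn_unitChordArea.mono hsub) (continuousOn_unitChordArcLength.mono hsub)
    (fun θ hθ => hasDerivAt_unitChordArea (hsin hθ).ne') (fun θ hθ => ?_)
    (fun θ hθ => div_pos (sin_sub_mul_cos_pos (hIoo hθ)) (by have := hsin hθ; positivity))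
    ?_ (hf.comp_unitChordArea_eqOn.mono hsub)
  · refine (hasDerivAt_unitChordArcLength hθ.1.ne' (hsin hθ).ne').congr_deriv ?_
    have := hsin hθ
    field_simp
  · intro a ha b hb hab
    have := strictMonoOn_sin.monotoneOn ⟨by linarith [ha.1, pi_pos], ha.2.le⟩
      ⟨by linarith [hb.1, pi_pos], hb.2.le⟩ hab
    exact mul_le_mul_of_nonneg_left this zero_le_two

end IsArcOne

/-- Chordal isoperimetric estimate: if a convex hexagon has sides of lengths
`ℓ₁, ..., ℓ₆ < 1` and each side is replaced by a circular arc with the same endpoints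
enclosing area `xᵢ ≥ 0` with the side, with `xᵢ/ℓᵢ ≤ π/8`, then the total length
`L(γ) = ∑ arc(ℓᵢ, xᵢ) = ∑ ℓᵢ · arc₁(xᵢ/ℓᵢ²)` satisfies
`L(γ) ≥ P(Π) · arc₁((∑xᵢ)/P(Π))` with `P(Π) = ∑ ℓᵢ`. -/
theorem stmt8 (f : ℝ → ℝ) (hf : IsArcOne f) (ℓ x : Fin 6 → ℝ)
    (hℓ0 : ∀ i, 0 < ℓ i) (hℓ1 : ∀ i, ℓ i < 1)
    (hx : ∀ i, 0 ≤ x i) (hratio : ∀ i, x i / ℓ i ≤ Real.pi / 8) :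
    (∑ i, ℓ i) * f ((∑ i, x i) / (∑ i, ℓ i)) ≤ ∑ i, ℓ i * f (x i / (ℓ i) ^ 2) := by
  have hnonneg : ∀ i, 0 ≤ x i / ℓ i := fun i => div_nonneg (hx i) (hℓ0 i).le
  have hdiv_le : ∀ i, x i / ℓ i ≤ x i / ℓ i ^ 2 := fun i =>
    div_le_div_of_nonneg_left (hx i) (by have := hℓ0 i; positivity)
      (sq_le (hℓ0 i).le (hℓ1 i).le)
  calc (∑ i, ℓ i) * f ((∑ i, x i) / (∑ i, ℓ i)) ≤ ∑ i, ℓ i * f (x i / ℓ i) :=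
        hf.convexOn.sum_mul_map_sum_div_sum_le Finset.univ_nonempty (fun i _ => hℓ0 i)
          fun i _ => ⟨hnonneg i, hratio i⟩
    _ ≤ ∑ i, ℓ i * f (x i / ℓ i ^ 2) := by
        gcongr with i
        · exact (hℓ0 i).le
        · exact hf.monotoneOn (mem_Ici.2 (hnonneg i)) (mem_Ici.2 ((hnonneg i).trans (hdiv_le i)))
            (hdiv_le i)
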